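/- Let α > 0. The coefficient array β defined by β_{j,k} = 2^{−j/2} if k < 2^{j/(1+2α)} and β_{j,k} = 0 otherwise satisfies the weak Besov condition W_{2/(1+2α)}. -/

import Mathlib

open scoped BigOperators

/-- The weak Besov condition `W_{2/(1+2α)}`. -/
def CondW (β : ℕ → ℕ → ℝ) (α : ℝ) : Prop :=
  ∃ C : ℝ, ∀ u : ℝ, 0 < u →
    {q : ℕ × ℕ | q.2 < 2 ^ q.1 ∧ u < |β q.1 q.2|}.Finite ∧
      u ^ (2 / (1 + 2 * α)) *
        ({q : ℕ × ℕ | q.2 < 2 ^ q.1 ∧ u < |β q.1 q.2|}.ncard : ℝ) ≤ C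

/-!
With `r = 2^{1/(1+2α)}` and `p = 2/(1+2α)`, a nonzero coefficient `β_{j,k}` exceeds `u` only
when `r^j < u^{-p}` and `k < r^j`. Level `j` thus contributes at most `2 r^j` indices, and
summing this geometric series over the levels with `r^j < u^{-p}` gives at most a constant
times `u^{-p}` indices.
-/

open Finset

section GeometricCount

variable {r M : ℝ}

/-- Witnessed by the least `n` with `M < r ^ n`. -/
theorem exists_lt_pow_and_pow_sub_one_le (hr : 1 < r) (hM : 0 ≤ M) :
    ∃ n : ℕ, M < r ^ n ∧ r ^ n - 1 ≤ r * M := by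
  classical
  have hex := pow_unbounded_of_one_lt M hr
  refine ⟨Nat.find hex, Nat.find_spec hex, ?_⟩
  rcases hn : Nat.find hex with _ | k
  · simp only [pow_zero, sub_self]
    positivity
  · have hk : r ^ k ≤ M := not_lt.1 (Nat.find_min hex (hn ▸ k.lt_succ_self))
    rw [pow_succ']
    nlinarith

theorem setOf_pow_lt_finite_and_ncard_le (hr : 1 < r) (hM : 0 ≤ M) :
    {q : ℕ × ℕ | r ^ q.1 < M ∧ (q.2 : ℝ) < r ^ q.1}.Finite ∧
      ({q : ℕ × ℕ | r ^ q.1 < M ∧ (q.2 : ℝ) < r ^ q.1}.ncard : ℝ) ≤ 2 * r / (r - 1) * M := by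
  classical
  obtain ⟨n, hMn, hn⟩ := exists_lt_pow_and_pow_sub_one_le hr hM
  set T : Finset (ℕ × ℕ) := (range n).biUnion fun j => {j} ×ˢ range ⌈r ^ j⌉₊
  have hsub : {q : ℕ × ℕ | r ^ q.1 < M ∧ (q.2 : ℝ) < r ^ q.1} ⊆ T := by
    rintro ⟨j, k⟩ ⟨hj, hk⟩
    have hjn : j < n := (pow_lt_pow_iff_right₀ hr).1 (hj.trans hMn)
    simp only [T, coe_biUnion, coe_range, Set.mem_Iio, Set.mem_iUnion, mem_coe, mem_product,
      mem_singleton, mem_range]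
    exact ⟨j, hjn, rfl, Nat.lt_ceil.2 hk⟩
  have hlevel : ∀ j : ℕ, (⌈r ^ j⌉₊ : ℝ) ≤ 2 * r ^ j := fun j => by
    have h1 : 1 ≤ r ^ j := one_le_pow₀ hr.le
    linarith [Nat.ceil_lt_add_one (zero_le_one.trans h1)]
  refine ⟨T.finite_toSet.subset hsub, ?_⟩
  calc ({q : ℕ × ℕ | r ^ q.1 < M ∧ (q.2 : ℝ) < r ^ q.1}.ncard : ℝ)
      ≤ T.card := by
        rw [← Set.ncard_coe_finset]
        exact_mod_cast Set.ncard_le_ncard hsub T.finite_toSet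
    _ ≤ ∑ j ∈ range n, (⌈r ^ j⌉₊ : ℝ) := by
        exact_mod_cast card_biUnion_le.trans (by simp)
    _ ≤ ∑ j ∈ range n, 2 * r ^ j := sum_le_sum fun j _ => hlevel j
    _ = 2 * (r ^ n - 1) / (r - 1) := by rw [← mul_sum, geom_sum_eq hr.ne', mul_div_assoc]
    _ ≤ 2 * r / (r - 1) * M := by
        rw [mul_div_right_comm, mul_div_right_comm 2 r, mul_assoc]
        gcongr

end GeometricCount

section Rpow

variable {c : ℝ}

theorem rpow_natCast_div_eq_pow {a : ℝ} (ha : 0 ≤ a) (j : ℕ) :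
    a ^ ((j : ℝ) / c) = (a ^ (1 / c)) ^ j := by
  rw [← Real.rpow_natCast, ← Real.rpow_mul ha, one_div_mul_eq_div]

theorem two_rpow_pow_lt_rpow_neg {u : ℝ} (hc : 0 < c) (hu : 0 < u) {j : ℕ}
    (h : u < (2 : ℝ) ^ (-(j : ℝ) / 2)) : ((2 : ℝ) ^ (1 / c)) ^ j < u ^ (-(2 / c)) :=
  calc ((2 : ℝ) ^ (1 / c)) ^ j = ((2 : ℝ) ^ (-(j : ℝ) / 2)) ^ (-(2 / c)) := by
        rw [← rpow_natCast_div_eq_pow zero_le_two, ← Real.rpow_mul zero_le_two]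
        congr 1
        ring
    _ < u ^ (-(2 / c)) := Real.rpow_lt_rpow_of_neg hu h (neg_neg_of_pos (by positivity))

end Rpow

/-- the array `β_{j,k} = 2^{−j/2}` for `k < 2^{j/(1+2α)}` and `0`
otherwise satisfies the weak Besov condition `W_{2/(1+2α)}`. -/
theorem stmt_14 (α : ℝ) (hα : 0 < α)
    (β : ℕ → ℕ → ℝ)
    (hβdef : ∀ j k : ℕ, β j k =
      if (k : ℝ) < (2 : ℝ) ^ ((j : ℝ) / (1 + 2 * α)) then (2 : ℝ) ^ (-(j : ℝ) / 2)
      else 0) :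
    CondW β α := by
  have hc : 0 < 1 + 2 * α := by linarith
  set r : ℝ := (2 : ℝ) ^ (1 / (1 + 2 * α))
  have hr : 1 < r := Real.one_lt_rpow one_lt_two (by positivity)
  refine ⟨2 * r / (r - 1), fun u hu => ?_⟩
  have hsub : {q : ℕ × ℕ | q.2 < 2 ^ q.1 ∧ u < |β q.1 q.2|} ⊆
      {q : ℕ × ℕ | r ^ q.1 < u ^ (-(2 / (1 + 2 * α))) ∧ (q.2 : ℝ) < r ^ q.1} := by
    rintro ⟨j, k⟩ ⟨-, hβu⟩
    simp only [hβdef] at hβu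
    split_ifs at hβu with hk
    · rw [abs_of_pos (by positivity)] at hβu
      exact ⟨two_rpow_pow_lt_rpow_neg hc hu hβu, rpow_natCast_div_eq_pow zero_le_two j ▸ hk⟩
    · rw [abs_zero] at hβu
      exact absurd hu hβu.not_gt
  obtain ⟨hfin, hcard⟩ := setOf_pow_lt_finite_and_ncard_le hr (Real.rpow_nonneg hu.le _)
  refine ⟨hfin.subset hsub, ?_⟩
  calc u ^ (2 / (1 + 2 * α)) * ({q : ℕ × ℕ | q.2 < 2 ^ q.1 ∧ u < |β q.1 q.2|}.ncard : ℝ)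
      ≤ u ^ (2 / (1 + 2 * α)) * (2 * r / (r - 1) * u ^ (-(2 / (1 + 2 * α)))) := by
        gcongr
        exact (Nat.cast_le.2 (Set.ncard_le_ncard hsub hfin)).trans hcard
    _ = 2 * r / (r - 1) := by
        rw [Real.rpow_neg hu.le, mul_left_comm, mul_inv_cancel₀ (by positivity), mul_one]
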